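/- arXiv:2411.15651 — 2 statements merged into one kernel-verified Lean document; each statement's English description precedes it below -/
import Mathlib

section
/- Under the assumptions of the previous statement, if additionally M ⪯ m̄·I for some m̄ > 0 and α is a real number with 1 > α ≥ √(1 - λ_min(Q)/m̄) (where λ_min(Q) ≤ m̄), then A_clᵀ M A_cl - α² M ⪯ 0, i.e., the closed-loop system is contracting with metric M and rate α. -/
open Matrix

private lemma psd_smul_aux {n : ℕ} {c : ℝ} (hc : 0 ≤ c)
    {X : Matrix (Fin n) (Fin n) ℝ} (hX : X.PosSemidef) : (c • X).PosSemidef := by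
  constructor
  · unfold Matrix.IsHermitian
    rw [conjTranspose_smul, hX.1]
    simp
  · intro x
    exact (hX.smul hc).2 x

/-- Under the DARE setting, if `M ⪯ m̄·I` and `1 > α ≥ √(1 - λ_min(Q)/m̄)`
(with `λ_min(Q) ≤ m̄`), then `A_clᵀ M A_cl - α² M ⪯ 0`: the closed loop is contracting
with metric `M` and rate `α`. Here `lQ` plays the role of `λ_min(Q)`, characterized by
`lQ·I ⪯ Q`. -/
theorem dare_closed_loop_contracting {n m : ℕ}
    (A M Q : Matrix (Fin n) (Fin n) ℝ) (B : Matrix (Fin n) (Fin m) ℝ)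
    (R : Matrix (Fin m) (Fin m) ℝ)
    (hM : M.PosDef) (hQ : Q.PosDef) (hR : R.PosDef)
    (hDARE : M = Aᵀ * M * A - (Aᵀ * M * B) * (R + Bᵀ * M * B)⁻¹ * (Bᵀ * M * A) + Q)
    (K : Matrix (Fin m) (Fin n) ℝ)
    (hK : K = (R + Bᵀ * M * B)⁻¹ * (Bᵀ * M * A))
    (Acl : Matrix (Fin n) (Fin n) ℝ)
    (hAcl : Acl = A - B * K)
    (mbar : ℝ) (hmbar : 0 < mbar)
    (hMub : (mbar • (1 : Matrix (Fin n) (Fin n) ℝ) - M).PosSemidef)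
    (lQ : ℝ) (hlQpos : 0 < lQ)
    (hlQ : (Q - lQ • (1 : Matrix (Fin n) (Fin n) ℝ)).PosSemidef)
    (hlQle : lQ ≤ mbar)
    (α : ℝ) (hαlb : Real.sqrt (1 - lQ / mbar) ≤ α) (hα1 : α < 1) :
    ((α ^ 2) • M - Aclᵀ * M * Acl).PosSemidef := by
  -- basic symmetry facts
  have hMt : Mᵀ = M := hM.1
  have hRt : Rᵀ = R := hR.1
  set S : Matrix (Fin m) (Fin m) ℝ := R + Bᵀ * M * B with hSdef
  have hSpd : S.PosDef := hR.add_posSemidef (hM.posSemidef.conjTranspose_mul_mul_same B)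
  have hSt : Sᵀ = S := hSpd.1
  have hSunit : IsUnit S.det := isUnit_iff_ne_zero.mpr (ne_of_gt hSpd.det_pos)
  have hSiS : S⁻¹ * S = 1 := nonsing_inv_mul S hSunit
  have hSSi : S * S⁻¹ = 1 := mul_nonsing_inv S hSunit
  have hSit : (S⁻¹)ᵀ = S⁻¹ := by rw [transpose_nonsing_inv, hSt]
  -- K relations
  have hSK : S * K = Bᵀ * M * A := by
    rw [hK, ← Matrix.mul_assoc, hSSi, Matrix.one_mul]
  have hKtS : Kᵀ * S = Aᵀ * M * B := by
    rw [hK, Matrix.transpose_mul, hSit, Matrix.mul_assoc, hSiS, Matrix.mul_one]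
    simp [Matrix.transpose_mul, hMt, Matrix.mul_assoc]
  -- key identity : Aclᵀ M Acl = M - Q - Kᵀ R K
  have hkey : Aclᵀ * M * Acl = M - Q - Kᵀ * R * K := by
    have hexp : Aclᵀ * M * Acl =
        Aᵀ * M * A - (Aᵀ * M * B) * K - Kᵀ * (Bᵀ * M * A) + Kᵀ * (Bᵀ * M * B) * K := by
      rw [hAcl]
      simp only [Matrix.transpose_sub, Matrix.transpose_mul, Matrix.sub_mul, Matrix.mul_sub,
        Matrix.mul_assoc]
      abel
    have hBMB : Bᵀ * M * B = S - R := by rw [hSdef]; abel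
    have h1 : (Aᵀ * M * B) * K = Kᵀ * S * K := by rw [← hKtS]
    have h2 : Kᵀ * (Bᵀ * M * A) = Kᵀ * S * K := by rw [← hSK, Matrix.mul_assoc]
    have h3 : Kᵀ * (Bᵀ * M * B) * K = Kᵀ * S * K - Kᵀ * R * K := by
      rw [hBMB, Matrix.mul_sub, Matrix.sub_mul]
    have h4 : (Aᵀ * M * B) * S⁻¹ * (Bᵀ * M * A) = Kᵀ * S * K := by
      rw [← hKtS, ← hSK, Matrix.mul_assoc Kᵀ S S⁻¹, hSSi, Matrix.mul_one, ← Matrix.mul_assoc]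
    have hDARE' : M = Aᵀ * M * A - Kᵀ * S * K + Q := by
      conv_lhs => rw [hDARE]
      rw [h4]
    have h5 : Aᵀ * M * A - Kᵀ * S * K = M - Q := by
      nth_rewrite 2 [hDARE']
      abel
    rw [hexp, h1, h2, h3, ← h5]
    abel
  -- scalar inequalities
  have hc0 : (0:ℝ) ≤ 1 - lQ / mbar := by
    have : lQ / mbar ≤ 1 := (div_le_one hmbar).mpr hlQle
    linarith
  have hα0 : 0 ≤ α := le_trans (Real.sqrt_nonneg _) hαlb
  have hα2 : 1 - lQ / mbar ≤ α ^ 2 := by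
    have := Real.sq_sqrt hc0
    nlinarith [Real.sqrt_nonneg (1 - lQ / mbar)]
  have hcnn : (0:ℝ) ≤ 1 - α ^ 2 := by nlinarith
  have hcm : (1 - α ^ 2) * mbar ≤ lQ := by
    have h := mul_le_mul_of_nonneg_right hα2 (le_of_lt hmbar)
    have hd : (1 - lQ / mbar) * mbar = mbar - lQ := by field_simp
    nlinarith
  -- assemble PSD decomposition
  have hdecomp : (α ^ 2) • M - Aclᵀ * M * Acl =
      Kᵀ * R * K + (Q - lQ • (1 : Matrix (Fin n) (Fin n) ℝ)) +
      ((lQ - (1 - α ^ 2) * mbar) • (1 : Matrix (Fin n) (Fin n) ℝ) +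
        (1 - α ^ 2) • (mbar • (1 : Matrix (Fin n) (Fin n) ℝ) - M)) := by
    rw [hkey]
    module
  rw [hdecomp]
  have h1 : (Kᵀ * R * K).PosSemidef := hR.posSemidef.conjTranspose_mul_mul_same K
  have h2 : ((lQ - (1 - α ^ 2) * mbar) • (1 : Matrix (Fin n) (Fin n) ℝ)).PosSemidef :=
    psd_smul_aux (by linarith) Matrix.PosSemidef.one
  have h3 : ((1 - α ^ 2) • (mbar • (1 : Matrix (Fin n) (Fin n) ℝ) - M)).PosSemidef :=
    psd_smul_aux hcnn hMub
  exact (h1.add hlQ).add (h2.add h3)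
end

section
/- Consider sequences x_k, z_k in ℝⁿ with z_{k+1} = F(z_k, k) + σ(k) and x_{k+1} = F(x_k, k), and suppose there exist constants 0 < m ≤ m̄ and symmetric matrices M(k) with m·I ⪯ M(k) ⪯ m̄·I such that (z_{k+1} - x_{k+1} - σ(k))ᵀ M(k+1) (z_{k+1} - x_{k+1} - σ(k)) ≤ α² (z_k - x_k)ᵀ M(k) (z_k - x_k) for all k, where 0 ≤ α < 1, and ‖σ(k)‖ ≤ σ̄ for all k. Then ‖z_k - x_k‖ ≤ α^k √(m̄/m) ‖z_0 - x_0‖ + (σ̄/(1-α)) √(m̄/m) (1 - α^k) for all k. -/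
open Matrix

/-- Euclidean (2-)norm of a vector in `ℝⁿ`. -/
noncomputable def euclidNorm {n : ℕ} (v : Fin n → ℝ) : ℝ := Real.sqrt (v ⬝ᵥ v)

lemma euclidNorm_eq {n : ℕ} (v : Fin n → ℝ) :
    euclidNorm v = ‖(WithLp.equiv 2 (Fin n → ℝ)).symm v‖ := by
  rw [EuclideanSpace.norm_eq]
  unfold euclidNorm dotProduct
  congr 1
  exact Finset.sum_congr rfl fun i _ => by
    simp [Real.norm_eq_abs, sq_abs, sq, WithLp.equiv, Equiv.refl]

lemma euclidNorm_add_le {n : ℕ} (u v : Fin n → ℝ) : euclidNorm (u + v) ≤ euclidNorm u + euclidNorm v := by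
  rw [euclidNorm_eq, euclidNorm_eq, euclidNorm_eq]
  exact norm_add_le _ _

lemma euclidNorm_nonneg' {n : ℕ} (v : Fin n → ℝ) : 0 ≤ euclidNorm v := Real.sqrt_nonneg _

lemma dot_self_nonneg {n : ℕ} (v : Fin n → ℝ) : 0 ≤ v ⬝ᵥ v :=
  Finset.sum_nonneg fun i _ => mul_self_nonneg _

open scoped MatrixOrder in
lemma form_eq_sq {n : ℕ} {M : Matrix (Fin n) (Fin n) ℝ} (hM : M.PosSemidef)
    (w : Fin n → ℝ) : w ⬝ᵥ M *ᵥ w = (CFC.sqrt M *ᵥ w) ⬝ᵥ (CFC.sqrt M *ᵥ w) := by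
  have hB : (CFC.sqrt M)ᵀ = CFC.sqrt M := by
    have h := (CFC.sqrt_nonneg M).posSemidef.1
    rwa [IsHermitian, conjTranspose_eq_transpose_of_trivial] at h
  conv_lhs => rw [← CFC.sqrt_mul_sqrt_self M hM.nonneg]
  rw [← mulVec_mulVec, dotProduct_mulVec, ← mulVec_transpose, hB]

lemma sqrt_form_add_le {n : ℕ} {M : Matrix (Fin n) (Fin n) ℝ} (hM : M.PosSemidef)
    (u v : Fin n → ℝ) :
    Real.sqrt ((u + v) ⬝ᵥ M *ᵥ (u + v))
      ≤ Real.sqrt (u ⬝ᵥ M *ᵥ u) + Real.sqrt (v ⬝ᵥ M *ᵥ v) := by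
  rw [form_eq_sq hM, form_eq_sq hM, form_eq_sq hM, mulVec_add]
  exact euclidNorm_add_le _ _

/-- robustness of discrete contracting systems (Theorem 2). If
`z_{k+1} = F(z_k,k) + σ(k)`, `x_{k+1} = F(x_k,k)`, the metric `M(k)` satisfies
`m·I ⪯ M(k) ⪯ m̄·I`, the per-step weighted contraction
`(z_{k+1}-x_{k+1}-σ(k))ᵀ M(k+1) (z_{k+1}-x_{k+1}-σ(k)) ≤ α² (z_k-x_k)ᵀ M(k) (z_k-x_k)`
holds with `0 ≤ α < 1`, and `‖σ(k)‖ ≤ σ̄`, then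
`‖z_k - x_k‖ ≤ α^k √(m̄/m) ‖z_0 - x_0‖ + (σ̄/(1-α)) √(m̄/m) (1 - α^k)`. -/
theorem disturbed_contraction_tracking_bound {n : ℕ}
    (F : (Fin n → ℝ) → ℕ → (Fin n → ℝ))
    (x z : ℕ → (Fin n → ℝ)) (σ : ℕ → (Fin n → ℝ))
    (hz : ∀ k, z (k + 1) = F (z k) k + σ k)
    (hx : ∀ k, x (k + 1) = F (x k) k)
    (M : ℕ → Matrix (Fin n) (Fin n) ℝ)
    (hMsym : ∀ k, (M k).IsHermitian)
    (m mbar : ℝ) (hm : 0 < m) (hmm : m ≤ mbar)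
    (hMlb : ∀ k, (M k - m • (1 : Matrix (Fin n) (Fin n) ℝ)).PosSemidef)
    (hMub : ∀ k, (mbar • (1 : Matrix (Fin n) (Fin n) ℝ) - M k).PosSemidef)
    (α : ℝ) (hα0 : 0 ≤ α) (hα1 : α < 1)
    (hcontr : ∀ k,
      (z (k + 1) - x (k + 1) - σ k) ⬝ᵥ (M (k + 1)).mulVec (z (k + 1) - x (k + 1) - σ k)
        ≤ α ^ 2 * ((z k - x k) ⬝ᵥ (M k).mulVec (z k - x k)))
    (σbar : ℝ) (hσ : ∀ k, euclidNorm (σ k) ≤ σbar) :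
    ∀ k, euclidNorm (z k - x k)
      ≤ α ^ k * Real.sqrt (mbar / m) * euclidNorm (z 0 - x 0)
        + (σbar / (1 - α)) * Real.sqrt (mbar / m) * (1 - α ^ k) := by
  -- basic bounds on the quadratic form
  have hlb : ∀ k (w : Fin n → ℝ), m * (w ⬝ᵥ w) ≤ w ⬝ᵥ M k *ᵥ w := by
    intro k w
    have h := (hMlb k).dotProduct_mulVec_nonneg w
    simpa [sub_mulVec, smul_mulVec, one_mulVec, dotProduct_sub, dotProduct_smul,
      smul_eq_mul, sub_nonneg] using h
  have hub : ∀ k (w : Fin n → ℝ), w ⬝ᵥ M k *ᵥ w ≤ mbar * (w ⬝ᵥ w) := by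
    intro k w
    have h := (hMub k).dotProduct_mulVec_nonneg w
    simpa [sub_mulVec, smul_mulVec, one_mulVec, dotProduct_sub, dotProduct_smul,
      smul_eq_mul, sub_nonneg] using h
  have hPSD : ∀ k, (M k).PosSemidef := fun k =>
    Matrix.PosSemidef.of_dotProduct_mulVec_nonneg (hMsym k) (fun w => by
      have := hlb k w
      have h2 : 0 ≤ m * (w ⬝ᵥ w) := mul_nonneg hm.le (dot_self_nonneg w)
      simpa using le_trans h2 this)
  set V : ℕ → ℝ := fun k => Real.sqrt ((z k - x k) ⬝ᵥ M k *ᵥ (z k - x k)) with hV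
  have hVnonneg : ∀ k, 0 ≤ V k := fun k => Real.sqrt_nonneg _
  have hσbar : 0 ≤ σbar := le_trans (euclidNorm_nonneg' (σ 0)) (hσ 0)
  have hsmb : 0 ≤ Real.sqrt mbar := Real.sqrt_nonneg _
  set C : ℝ := Real.sqrt mbar * σbar with hC
  have hCnn : 0 ≤ C := mul_nonneg hsmb hσbar
  -- one step estimate
  have hstep : ∀ k, V (k + 1) ≤ α * V k + C := by
    intro k
    have hsplit : z (k + 1) - x (k + 1) = (z (k + 1) - x (k + 1) - σ k) + σ k := by
      abel
    have h1 : V (k + 1)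
        ≤ Real.sqrt ((z (k + 1) - x (k + 1) - σ k) ⬝ᵥ M (k + 1) *ᵥ (z (k + 1) - x (k + 1) - σ k))
          + Real.sqrt (σ k ⬝ᵥ M (k + 1) *ᵥ σ k) := by
      have h := sqrt_form_add_le (hPSD (k + 1)) (z (k + 1) - x (k + 1) - σ k) (σ k)
      rw [← hsplit] at h
      exact h
    have h2 : Real.sqrt ((z (k + 1) - x (k + 1) - σ k) ⬝ᵥ M (k + 1) *ᵥ (z (k + 1) - x (k + 1) - σ k))
        ≤ α * V k := by
      have := Real.sqrt_le_sqrt (hcontr k)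
      rwa [Real.sqrt_mul (sq_nonneg α), Real.sqrt_sq hα0] at this
    have h3 : Real.sqrt (σ k ⬝ᵥ M (k + 1) *ᵥ σ k) ≤ C := by
      have := Real.sqrt_le_sqrt (hub (k + 1) (σ k))
      rw [Real.sqrt_mul (le_trans hm.le hmm)] at this
      refine le_trans this ?_
      exact mul_le_mul_of_nonneg_left (hσ k) hsmb
    linarith
  -- iterate
  have hiter : ∀ k, V k ≤ α ^ k * V 0 + C * ((1 - α ^ k) / (1 - α)) := by
    intro k
    induction k with
    | zero => simp
    | succ k ih =>
        have h1 := hstep k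
        have h2 : α * V k ≤ α * (α ^ k * V 0 + C * ((1 - α ^ k) / (1 - α))) :=
          mul_le_mul_of_nonneg_left ih hα0
        have heq : α * (α ^ k * V 0 + C * ((1 - α ^ k) / (1 - α))) + C
            = α ^ (k + 1) * V 0 + C * ((1 - α ^ (k + 1)) / (1 - α)) := by
          have h1α : (1 : ℝ) - α ≠ 0 := by linarith
          field_simp
          ring
        linarith [heq ▸ (add_le_add_left h2 C)]
  -- conclude
  intro k
  have hsm : 0 < Real.sqrt m := Real.sqrt_pos.mpr hm
  have h1 : Real.sqrt m * euclidNorm (z k - x k) ≤ V k := by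
    have := Real.sqrt_le_sqrt (hlb k (z k - x k))
    rwa [Real.sqrt_mul hm.le] at this
  have h3 : V 0 ≤ Real.sqrt mbar * euclidNorm (z 0 - x 0) := by
    have := Real.sqrt_le_sqrt (hub 0 (z 0 - x 0))
    rwa [Real.sqrt_mul (le_trans hm.le hmm)] at this
  have h4 : α ^ k * V 0 ≤ α ^ k * (Real.sqrt mbar * euclidNorm (z 0 - x 0)) :=
    mul_le_mul_of_nonneg_left h3 (pow_nonneg hα0 k)
  have hd : Real.sqrt (mbar / m) = Real.sqrt mbar / Real.sqrt m :=
    Real.sqrt_div' mbar hm.le ▸ by rw [Real.sqrt_div (le_trans hm.le hmm)]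
  rw [hd]
  rw [← mul_le_mul_iff_of_pos_left hsm]
  have hrhs : Real.sqrt m * (α ^ k * (Real.sqrt mbar / Real.sqrt m) * euclidNorm (z 0 - x 0)
      + σbar / (1 - α) * (Real.sqrt mbar / Real.sqrt m) * (1 - α ^ k))
      = α ^ k * (Real.sqrt mbar * euclidNorm (z 0 - x 0))
        + C * ((1 - α ^ k) / (1 - α)) := by
    have h1α : (1 : ℝ) - α ≠ 0 := by linarith
    field_simp [hC]
    ring
  rw [hrhs]
  have := hiter k
  linarith
end
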